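/- arXiv:1705.07498 — 5 statements merged into one kernel-verified Lean document; each statement's English description precedes it below -/
import Mathlib

section
/- Let a,b,c,d be integers with (a,b) and (c,d) nonzero and the angles θ₁ = arg(a+ib), θ₂ = arg(c+id) distinct. Then |θ₁ - θ₂| ≥ 1/(√(a²+b²)·√(c²+d²)). -/
/-!
For Gaussian integers `z, w` put `g = z * conj w`, again a Gaussian integer, with `‖g‖ = ‖z‖ ‖w‖`
and `Im g = ‖g‖ sin θ` for `θ = arg z - arg w` (twice the signed area of the triangle `0, z, w`).
If `Im g ≠ 0` it is a nonzero integer, so `1 ≤ ‖g‖ |sin θ| ≤ ‖g‖ |θ|`. If `Im g = 0`, then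
`sin θ = 0` with `θ ≠ 0`, so `|θ| ≥ π > 1`, while `‖g‖ ≥ 1` for `g ≠ 0`.
-/

open Complex ComplexConjugate

theorem Complex.im_mul_conj_eq_norm_mul_norm_mul_sin_arg_sub (z w : ℂ) :
    (z * conj w).im = ‖z‖ * ‖w‖ * Real.sin (arg z - arg w) := by
  have hpolar : z * conj w = ((‖z‖ * ‖w‖ : ℝ) : ℂ) * exp ((arg z - arg w : ℝ) * I) := by
    conv_lhs => rw [← norm_mul_exp_arg_mul_I z, ← norm_mul_exp_arg_mul_I w]
    rw [map_mul, ← exp_conj, map_mul, conj_ofReal, conj_ofReal, conj_I]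
    push_cast
    rw [sub_mul, exp_sub, div_eq_mul_inv, ← exp_neg]
    ring_nf
  rw [hpolar, im_ofReal_mul, exp_ofReal_mul_I_im]

theorem Real.pi_le_abs_of_sin_eq_zero {θ : ℝ} (hsin : Real.sin θ = 0) (hθ : θ ≠ 0) :
    Real.pi ≤ |θ| := by
  by_contra! hlt
  rw [abs_lt] at hlt
  exact hθ ((Real.sin_eq_zero_iff_of_lt_of_lt hlt.1 hlt.2).1 hsin)

namespace GaussianInt

theorem one_le_norm_toComplex {g : GaussianInt} (hg : g ≠ 0) : 1 ≤ ‖(g : ℂ)‖ := by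
  rw [Complex.norm_def, Real.one_le_sqrt, ← intCast_real_norm]
  exact_mod_cast norm_pos.2 hg

theorem one_le_norm_mul_abs_of_im_eq_mul_sin {g : GaussianInt} (hg : g ≠ 0) {θ : ℝ} (hθ : θ ≠ 0)
    (him : (g : ℂ).im = ‖(g : ℂ)‖ * Real.sin θ) : 1 ≤ ‖(g : ℂ)‖ * |θ| := by
  have hnorm := one_le_norm_toComplex hg
  rcases eq_or_ne g.im 0 with h0 | h0
  · have hsin : Real.sin θ = 0 := by
      rw [← intCast_im, h0, Int.cast_zero, eq_comm] at him
      exact (mul_eq_zero.1 him).resolve_left (by positivity)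
    have hpi := Real.pi_le_abs_of_sin_eq_zero hsin hθ
    nlinarith [Real.pi_gt_three]
  · calc (1 : ℝ) ≤ |(g.im : ℝ)| := by exact_mod_cast Int.one_le_abs h0
      _ = ‖(g : ℂ)‖ * |Real.sin θ| := by rw [intCast_im, him, abs_mul, abs_norm]
      _ ≤ ‖(g : ℂ)‖ * |θ| := mul_le_mul_of_nonneg_left Real.abs_sin_le_abs (_root_.norm_nonneg _)

end GaussianInt

theorem stmt_1_general (a b c d : ℤ)
    (hθ : Complex.arg ((a : ℂ) + (b : ℂ) * Complex.I) ≠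
      Complex.arg ((c : ℂ) + (d : ℂ) * Complex.I)) :
    |Complex.arg ((a : ℂ) + (b : ℂ) * Complex.I) -
        Complex.arg ((c : ℂ) + (d : ℂ) * Complex.I)| ≥
      1 / (Real.sqrt ((a : ℝ) ^ 2 + (b : ℝ) ^ 2) * Real.sqrt ((c : ℝ) ^ 2 + (d : ℝ) ^ 2)) := by
  have hnorm (m n : ℤ) : √((m : ℝ) ^ 2 + (n : ℝ) ^ 2) = ‖((⟨m, n⟩ : GaussianInt) : ℂ)‖ := by
    rw [GaussianInt.toComplex_def', ← norm_add_mul_I]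
    push_cast
    rfl
  rw [hnorm, hnorm]
  rw [← GaussianInt.toComplex_def', ← GaussianInt.toComplex_def'] at hθ ⊢
  generalize (⟨a, b⟩ : GaussianInt) = z at hθ ⊢
  generalize (⟨c, d⟩ : GaussianInt) = w at hθ ⊢
  have hprod : ((z * star w : GaussianInt) : ℂ) = z * conj (w : ℂ) := by
    rw [GaussianInt.toComplex_mul, GaussianInt.toComplex_star]
  rw [ge_iff_le, ← norm_conj (w : ℂ), ← norm_mul, ← hprod]
  rcases eq_or_ne (z * star w) 0 with h0 | h0
  · -- the bound is `1 / 0 = 0`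
    simp [h0]
  rw [div_le_iff₀' (one_pos.trans_le (GaussianInt.one_le_norm_toComplex h0))]
  refine GaussianInt.one_le_norm_mul_abs_of_im_eq_mul_sin h0 (sub_ne_zero.2 hθ) ?_
  rw [hprod, im_mul_conj_eq_norm_mul_norm_mul_sin_arg_sub, norm_mul, norm_conj]

/-- For nonzero lattice points `(a,b)` and `(c,d)` whose Gaussian integers
`a+ib`, `c+id` have distinct arguments `θ₁ ≠ θ₂`, one has
`|θ₁ - θ₂| ≥ 1/(√(a²+b²)·√(c²+d²))`. -/
theorem stmt_1 (a b c d : ℤ) (hab : (a, b) ≠ (0, 0)) (hcd : (c, d) ≠ (0, 0))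
    (hθ : Complex.arg ((a : ℂ) + (b : ℂ) * Complex.I) ≠
      Complex.arg ((c : ℂ) + (d : ℂ) * Complex.I)) :
    |Complex.arg ((a : ℂ) + (b : ℂ) * Complex.I) -
        Complex.arg ((c : ℂ) + (d : ℂ) * Complex.I)| ≥
      1 / (Real.sqrt ((a : ℝ) ^ 2 + (b : ℝ) ^ 2) * Real.sqrt ((c : ℝ) ^ 2 + (d : ℝ) ^ 2)) :=
  stmt_1_general a b c d hθ
end

section
/- There is no Gaussian integer a+ib with a,b > 0, a²+b² ≤ x, and 0 < arctan(b/a) < x^{-1/2}. -/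
open Real

theorem div_sqrt_one_add_sq_le_arctan {t : ℝ} (ht : 0 ≤ t) : t / √(1 + t ^ 2) ≤ arctan t := by
  rw [← sin_arctan]
  exact sin_le (arctan_nonneg.mpr ht)

theorem div_sqrt_sq_add_sq_le_arctan_div {a b : ℝ} (ha : 0 < a) (hb : 0 ≤ b) :
    b / √(a ^ 2 + b ^ 2) ≤ arctan (b / a) := by
  have hscale : √(a ^ 2 + b ^ 2) = a * √(1 + (b / a) ^ 2) := by
    rw [← sqrt_sq ha.le, ← sqrt_mul (sq_nonneg a), sqrt_sq ha.le]
    congr 1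
    field_simp
  calc b / √(a ^ 2 + b ^ 2) = b / a / √(1 + (b / a) ^ 2) := by rw [hscale, div_div]
    _ ≤ arctan (b / a) := div_sqrt_one_add_sq_le_arctan (div_nonneg hb ha.le)

theorem stmt_4_general (x : ℝ) (a b : ℕ) (ha : 0 < a) (hb : 0 < b) :
    ¬ ((a : ℝ) ^ 2 + (b : ℝ) ^ 2 ≤ x ∧ 0 < Real.arctan ((b : ℝ) / a) ∧
      Real.arctan ((b : ℝ) / a) < x ^ (-(1 : ℝ) / 2)) := by
  rintro ⟨hle, -, hlt⟩
  have hb1 : (1 : ℝ) ≤ b := by exact_mod_cast hb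
  have hnorm : 0 < √((a : ℝ) ^ 2 + b ^ 2) := by positivity
  have hx : 0 ≤ x := le_trans (by positivity) hle
  have : x ^ (-(1 : ℝ) / 2) ≤ arctan ((b : ℝ) / a) :=
    calc x ^ (-(1 : ℝ) / 2) = (√x)⁻¹ := by rw [sqrt_eq_rpow, ← rpow_neg hx]; norm_num
      _ ≤ (√((a : ℝ) ^ 2 + b ^ 2))⁻¹ := inv_anti₀ hnorm (sqrt_le_sqrt hle)
      _ ≤ b / √((a : ℝ) ^ 2 + b ^ 2) := by rw [inv_eq_one_div]; gcongr
      _ ≤ arctan ((b : ℝ) / a) :=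
        div_sqrt_sq_add_sq_le_arctan_div (by exact_mod_cast ha) (Nat.cast_nonneg b)
  exact hlt.not_ge this

/-- There is no Gaussian integer `a + ib` with `a, b > 0`, `a² + b² ≤ x`, and
`0 < arctan(b/a) < x^{-1/2}`. -/
theorem stmt_4 (x : ℝ) (hx : 1 ≤ x) (a b : ℕ) (ha : 0 < a) (hb : 0 < b) :
    ¬ ((a : ℝ) ^ 2 + (b : ℝ) ^ 2 ≤ x ∧ 0 < Real.arctan ((b : ℝ) / a) ∧
      Real.arctan ((b : ℝ) / a) < x ^ (-(1 : ℝ) / 2)) :=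
  stmt_4_general x a b ha hb
end

section
/- Let q be odd and k ≥ 1. The set S¹_k = {f ∈ (F_q[S]/(S^k))^× : f(0)=1 and f(S)f(−S) = 1 mod S^k} is a subgroup of (F_q[S]/(S^k))^× of order q^⌊k/2⌋. -/
/-!
The Cayley transform `f ↦ (f - 1) / (f + 1)`, with inverse `a ↦ (1 + a) / (1 - a)`, maps the
units `f` with `f(0) = 1` and `f σ(f) = 1` bijectively onto the elements `a` with `σ(a) = -a`;
all denominators are units because `2` is invertible (`q` is odd) and `f - 1`, `a` are
nilpotent. Since `σ(S^i) = (-1)^i S^i`, the elements with `σ(a) = -a` form the `F_q`-span of the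
odd powers `S, S^3, …` below `S^k`, a space of dimension `⌊k/2⌋`.
-/

open Polynomial

set_option maxRecDepth 4000

/-- The Galois-type involution `σ : S ↦ -S` on `F_q[S]/(S^k)`. -/
noncomputable def sigmaMap (Fq : Type) [Field Fq] (k : ℕ) :
    AdjoinRoot (X ^ k : Polynomial Fq) →+* AdjoinRoot (X ^ k : Polynomial Fq) :=
  AdjoinRoot.lift (AdjoinRoot.of _) (-(AdjoinRoot.root _)) (by
    have h : (AdjoinRoot.root (X ^ k : Polynomial Fq)) ^ k = 0 := by
      have := AdjoinRoot.eval₂_root (X ^ k : Polynomial Fq)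
      simpa using this
    rw [Polynomial.eval₂_X_pow, neg_pow, h, mul_zero])

/-- Evaluation at `0` (the constant term), as a ring homomorphism `F_q[S]/(S^k) → F_q`. -/
noncomputable def ev0 (Fq : Type) [Field Fq] (k : ℕ) (hk : k ≠ 0) :
    AdjoinRoot (X ^ k : Polynomial Fq) →+* Fq :=
  AdjoinRoot.lift (RingHom.id Fq) 0 (by rw [Polynomial.eval₂_X_pow, zero_pow hk])

lemma two_ne_zero_of_odd_card {F : Type*} [Field F] [Fintype F] (hF : Odd (Fintype.card F)) :
    (2 : F) ≠ 0 :=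
  Ring.two_ne_zero fun h => by
    have := FiniteField.even_card_of_char_two h
    rw [Nat.odd_iff] at hF
    omega

section Cayley

variable {R : Type*} [CommRing R] (σ : R →+* R)

def unitsNorm : Rˣ →* Rˣ := MonoidHom.id Rˣ * Units.map (σ : R →* R)

lemma mem_ker_unitsNorm {f : Rˣ} : f ∈ (unitsNorm σ).ker ↔ (f : R) * σ f = 1 := by
  rw [MonoidHom.mem_ker, Units.ext_iff]
  rfl

noncomputable def cayley (x : R) : R := (x - 1) * Ring.inverse (x + 1)

noncomputable def cayleyInv (a : R) : R := (1 + a) * Ring.inverse (1 - a)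

variable {σ}

lemma mul_inverse_add_one_of_isNilpotent_sub_one (h2 : IsUnit (2 : R)) {x : R}
    (hx : IsNilpotent (x - 1)) : (x + 1) * Ring.inverse (x + 1) = 1 := by
  have hunit : IsUnit (x + 1) := by
    convert hx.isUnit_add_right_of_commute h2 (Commute.all _ _) using 1
    ring
  exact Ring.mul_inverse_cancel _ hunit

lemma mul_inverse_one_sub_of_isNilpotent {a : R} (ha : IsNilpotent a) :
    (1 - a) * Ring.inverse (1 - a) = 1 :=
  Ring.mul_inverse_cancel _ ha.isUnit_one_sub

lemma isNilpotent_cayley {x : R} (hx : IsNilpotent (x - 1)) : IsNilpotent (cayley x) :=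
  (Commute.all _ _).isNilpotent_mul_right hx

lemma map_cayley (h2 : IsUnit (2 : R)) {x : R} (hx : IsNilpotent (x - 1)) (hxσ : x * σ x = 1) :
    σ (cayley x) = -cayley x := by
  set u := Ring.inverse (x + 1)
  have hu : (x + 1) * u = 1 := mul_inverse_add_one_of_isNilpotent_sub_one h2 hx
  have hσu : (σ x + 1) * σ u = 1 := by simpa using congrArg σ hu
  rw [cayley, map_mul, map_sub, map_one]
  linear_combination (-(σ x - 1) * σ u) * hu + (-(x - 1) * u) * hσu + 2 * u * σ u * hxσ

lemma cayleyInv_mul_map_cayleyInv {a : R} (ha : IsNilpotent a) (hσa : σ a = -a) :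
    cayleyInv a * σ (cayleyInv a) = 1 := by
  set w := Ring.inverse (1 - a)
  have hw : (1 - a) * w = 1 := mul_inverse_one_sub_of_isNilpotent ha
  have hσw : (1 + a) * σ w = 1 := by simpa [hσa] using congrArg σ hw
  rw [cayleyInv, map_mul, map_add, map_one, hσa]
  linear_combination (1 + a) * σ w * hw + hσw

lemma isNilpotent_cayleyInv_sub_one {a : R} (ha : IsNilpotent a) :
    IsNilpotent (cayleyInv a - 1) := by
  have hw := mul_inverse_one_sub_of_isNilpotent ha
  have h : cayleyInv a - 1 = a * (2 * Ring.inverse (1 - a)) := by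
    rw [cayleyInv]; linear_combination hw
  rw [h]
  exact (Commute.all _ _).isNilpotent_mul_right ha

lemma cayleyInv_cayley (h2 : IsUnit (2 : R)) {x : R} (hx : IsNilpotent (x - 1)) :
    cayleyInv (cayley x) = x := by
  have hu := mul_inverse_add_one_of_isNilpotent_sub_one h2 hx
  have hw := mul_inverse_one_sub_of_isNilpotent (isNilpotent_cayley hx)
  have ha : cayley x = (x - 1) * Ring.inverse (x + 1) := rfl
  set w := Ring.inverse (1 - cayley x)
  rw [cayleyInv]
  linear_combination x * hw + w * (x - 1) * hu + w * (1 + x) * ha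

lemma cayley_cayleyInv (h2 : IsUnit (2 : R)) {a : R} (ha : IsNilpotent a) :
    cayley (cayleyInv a) = a := by
  have hu :=
    mul_inverse_add_one_of_isNilpotent_sub_one h2 (isNilpotent_cayleyInv_sub_one ha)
  have hw := mul_inverse_one_sub_of_isNilpotent ha
  rw [cayley]
  set u := Ring.inverse (cayleyInv a + 1)
  rw [cayleyInv] at hu ⊢
  linear_combination a * hu + u * (1 + a) * hw

noncomputable def cayleyEquiv (h2 : IsUnit (2 : R)) :
    {f : Rˣ // IsNilpotent ((f : R) - 1) ∧ (f : R) * σ f = 1} ≃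
      {a : R // IsNilpotent a ∧ σ a = -a} where
  toFun f := ⟨cayley (f.1 : R), isNilpotent_cayley f.2.1, map_cayley h2 f.2.1 f.2.2⟩
  invFun a := ⟨Units.mkOfMulEqOne _ _ (cayleyInv_mul_map_cayleyInv a.2.1 a.2.2),
    isNilpotent_cayleyInv_sub_one a.2.1, cayleyInv_mul_map_cayleyInv a.2.1 a.2.2⟩
  left_inv f := Subtype.ext (Units.ext (cayleyInv_cayley h2 f.2.1))
  right_inv a := Subtype.ext (cayley_cayleyInv h2 a.2.1)

end Cayley

section TruncatedPolynomial

variable (Fq : Type) [Field Fq] (k : ℕ)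

local notation "R" => AdjoinRoot (X ^ k : Polynomial Fq)

lemma root_pow_eq_zero : AdjoinRoot.root (X ^ k : Polynomial Fq) ^ k = 0 := by
  simpa using AdjoinRoot.eval₂_root (X ^ k : Polynomial Fq)

lemma sigmaMap_root : sigmaMap Fq k (AdjoinRoot.root _) = -AdjoinRoot.root _ :=
  AdjoinRoot.lift_root _

lemma sigmaMap_of (c : Fq) : sigmaMap Fq k (AdjoinRoot.of _ c) = AdjoinRoot.of _ c :=
  AdjoinRoot.lift_of _

lemma sigmaMap_smul (c : Fq) (x : R) : sigmaMap Fq k (c • x) = c • sigmaMap Fq k x := by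
  rw [Algebra.smul_def, Algebra.smul_def, map_mul, AdjoinRoot.algebraMap_eq, sigmaMap_of]

lemma ev0_comp_sigmaMap (hk : k ≠ 0) : (ev0 Fq k hk).comp (sigmaMap Fq k) = ev0 Fq k hk := by
  refine AdjoinRoot.ringHom_ext ?_ ?_
  · ext c
    simp [ev0, sigmaMap]
  · simp [ev0, sigmaMap]

lemma isNilpotent_iff_ev0_eq_zero (hk : k ≠ 0) {x : R} : IsNilpotent x ↔ ev0 Fq k hk x = 0 := by
  refine ⟨fun hx => (hx.map (ev0 Fq k hk)).eq_zero, fun hx => ?_⟩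
  induction x using AdjoinRoot.induction_on with | ih p => ?_
  have hp : p.coeff 0 = 0 := by simpa [ev0, Polynomial.eval₂_at_zero] using hx
  obtain ⟨r, rfl⟩ := Polynomial.X_dvd_iff.mpr hp
  refine ⟨k, ?_⟩
  rw [map_mul, AdjoinRoot.mk_X, mul_pow, root_pow_eq_zero, zero_mul]

lemma isNilpotent_sub_one_iff_ev0_eq_one (hk : k ≠ 0) {x : R} :
    IsNilpotent (x - 1) ↔ ev0 Fq k hk x = 1 := by
  rw [isNilpotent_iff_ev0_eq_zero Fq k hk, map_sub, map_one, sub_eq_zero]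

lemma isNilpotent_of_sigmaMap_eq_neg (hk : k ≠ 0) (h2 : (2 : Fq) ≠ 0) {x : R}
    (hx : sigmaMap Fq k x = -x) : IsNilpotent x := by
  have h := congrArg (ev0 Fq k hk) hx
  rw [← RingHom.comp_apply, ev0_comp_sigmaMap, map_neg, eq_neg_iff_add_eq_zero, ← two_mul] at h
  exact (isNilpotent_iff_ev0_eq_zero Fq k hk).mpr ((mul_eq_zero.mp h).resolve_left h2)

noncomputable def oddPow (j : Fin (k / 2)) : R := AdjoinRoot.root _ ^ (2 * (j : ℕ) + 1)

lemma linearIndependent_oddPow : LinearIndependent Fq (oddPow Fq k) := by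
  set b := AdjoinRoot.powerBasis' (monic_X_pow k : (X ^ k : Fq[X]).Monic)
  have hdim : b.dim = k := by rw [AdjoinRoot.powerBasis'_dim, natDegree_X_pow]
  let idx : Fin (k / 2) → Fin b.dim := fun j => ⟨2 * j + 1, by omega⟩
  have h : oddPow Fq k = b.basis ∘ idx := by
    ext j
    rw [Function.comp_apply, b.basis_eq_pow, AdjoinRoot.powerBasis'_gen]
    rfl
  rw [h]
  exact b.basis.linearIndependent.comp idx fun i j hij => by
    simpa [idx, Fin.ext_iff] using hij

lemma root_pow_sub_sigmaMap_mem_span (i : ℕ) :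
    AdjoinRoot.root _ ^ i - sigmaMap Fq k (AdjoinRoot.root _ ^ i) ∈
      Submodule.span Fq (Set.range (oddPow Fq k)) := by
  rw [map_pow, sigmaMap_root]
  rcases Nat.even_or_odd' i with ⟨j, rfl | rfl⟩
  · rw [Even.neg_pow ⟨j, two_mul j⟩, sub_self]
    exact Submodule.zero_mem _
  · rw [Odd.neg_pow ⟨j, rfl⟩, sub_neg_eq_add, ← two_smul Fq]
    refine Submodule.smul_mem _ _ ?_
    by_cases hj : j < k / 2
    · exact Submodule.subset_span ⟨⟨j, hj⟩, rfl⟩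
    · rw [pow_eq_zero_of_le (by omega) (root_pow_eq_zero Fq k)]
      exact Submodule.zero_mem _

lemma sub_sigmaMap_mem_span (x : R) :
    x - sigmaMap Fq k x ∈ Submodule.span Fq (Set.range (oddPow Fq k)) := by
  set b := AdjoinRoot.powerBasis' (monic_X_pow k : (X ^ k : Fq[X]).Monic)
  rw [← b.basis.sum_repr x, map_sum, ← Finset.sum_sub_distrib]
  refine Submodule.sum_mem _ fun i _ => ?_
  rw [sigmaMap_smul, ← smul_sub, b.basis_eq_pow, AdjoinRoot.powerBasis'_gen]
  exact Submodule.smul_mem _ _ (root_pow_sub_sigmaMap_mem_span Fq k i)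

lemma mem_span_oddPow_iff (h2 : (2 : Fq) ≠ 0) {x : R} :
    x ∈ Submodule.span Fq (Set.range (oddPow Fq k)) ↔ sigmaMap Fq k x = -x := by
  constructor
  · intro hx
    induction hx using Submodule.span_induction with
    | mem _ h =>
      obtain ⟨j, rfl⟩ := h
      rw [oddPow, map_pow, sigmaMap_root, Odd.neg_pow ⟨j, rfl⟩]
    | zero => rw [map_zero, neg_zero]
    | add x y _ _ hx hy => rw [map_add, hx, hy, neg_add]
    | smul c x _ hx => rw [sigmaMap_smul, hx, smul_neg]
  · intro hx
    have h : x = (2 : Fq)⁻¹ • (x - sigmaMap Fq k x) := by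
      rw [hx, sub_neg_eq_add, ← two_smul Fq, smul_smul, inv_mul_cancel₀ h2, one_smul]
    rw [h]
    exact Submodule.smul_mem _ _ (sub_sigmaMap_mem_span Fq k x)

lemma card_span_oddPow [Fintype Fq] :
    Nat.card (Submodule.span Fq (Set.range (oddPow Fq k))) = Fintype.card Fq ^ (k / 2) := by
  rw [Nat.card_congr (Module.Basis.span (linearIndependent_oddPow Fq k)).equivFun.toEquiv,
    Nat.card_fun, Nat.card_eq_fintype_card, Nat.card_eq_fintype_card, Fintype.card_fin]

end TruncatedPolynomial

/-- For `q` odd and `k ≥ 1`, the set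
`S¹_k = {f ∈ (F_q[S]/(S^k))^× : f(0) = 1, f(S)·f(−S) = 1}` is a subgroup of
`(F_q[S]/(S^k))^×` of order `q^⌊k/2⌋`. -/
theorem stmt_5 (Fq : Type) [Field Fq] [Fintype Fq] (hq : Odd (Fintype.card Fq))
    (k : ℕ) (hk : 1 ≤ k) :
    ∃ H : Subgroup (AdjoinRoot (X ^ k : Polynomial Fq))ˣ,
      (∀ f : (AdjoinRoot (X ^ k : Polynomial Fq))ˣ,
        f ∈ H ↔
          ev0 Fq k (Nat.one_le_iff_ne_zero.mp hk) (f : AdjoinRoot (X ^ k : Polynomial Fq)) = 1 ∧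
          (f : AdjoinRoot (X ^ k : Polynomial Fq)) *
            sigmaMap Fq k (f : AdjoinRoot (X ^ k : Polynomial Fq)) = 1) ∧
      Nat.card H = Fintype.card Fq ^ (k / 2) := by
  have hk0 : k ≠ 0 := Nat.one_le_iff_ne_zero.mp hk
  have h2 : (2 : Fq) ≠ 0 := two_ne_zero_of_odd_card hq
  have h2R : IsUnit (2 : AdjoinRoot (X ^ k : Polynomial Fq)) := by
    rw [← map_ofNat (AdjoinRoot.of (X ^ k : Polynomial Fq)) 2]
    exact (isUnit_iff_ne_zero.mpr h2).map _
  set H := (Units.map (ev0 Fq k hk0 : _ →* Fq)).ker ⊓ (unitsNorm (sigmaMap Fq k)).ker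
  have hmem : ∀ f, f ∈ H ↔ ev0 Fq k hk0 f = 1 ∧ f * sigmaMap Fq k f = 1 := fun f => by
    rw [Subgroup.mem_inf, MonoidHom.mem_ker, mem_ker_unitsNorm, Units.ext_iff]
    rfl
  refine ⟨H, hmem, ?_⟩
  calc Nat.card H
      = Nat.card {f : (AdjoinRoot (X ^ k : Polynomial Fq))ˣ //
          IsNilpotent ((f : AdjoinRoot (X ^ k : Polynomial Fq)) - 1) ∧ f * sigmaMap Fq k f = 1} :=
        Nat.card_congr <| Equiv.subtypeEquivRight fun f => by
          rw [hmem, isNilpotent_sub_one_iff_ev0_eq_one Fq k hk0]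
    _ = Nat.card {a : AdjoinRoot (X ^ k : Polynomial Fq) //
          IsNilpotent a ∧ sigmaMap Fq k a = -a} :=
        Nat.card_congr (cayleyEquiv h2R)
    _ = Nat.card (Submodule.span Fq (Set.range (oddPow Fq k))) :=
        Nat.card_congr <| Equiv.subtypeEquivRight fun a => by
          rw [mem_span_oddPow_iff Fq k h2]
          exact and_iff_right_of_imp (isNilpotent_of_sigmaMap_eq_neg Fq k hk0 h2)
    _ = Fintype.card Fq ^ (k / 2) := card_span_oddPow Fq k
end

section
/- Let q be odd and k ≥ 1. The subgroup H_k = {f ∈ (F_q[S]/(S^k))^× : f(−S) = f(S) mod S^k} has order (q−1)·q^⌊(k−1)/2⌋. -/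
/-!
A class in `F[S]/(S^k)` has a unique representative of degree `< k`, and it is fixed by
`S ↦ -S` iff that representative is even, since `2` is invertible in `F`. Even polynomials
of degree `< k` are `∑_{j ≤ n} v_j S^{2j}` with `n = ⌊(k-1)/2⌋`, and such a class is a unit
iff its constant term `v_0` is nonzero (the rest is nilpotent). Hence `H_k` is in bijection with
`{v : Fin (n+1) → F // v 0 ≠ 0}`, which has `(q-1) q^n` elements.
-/

open Polynomial

set_option maxRecDepth 4000

namespace Polynomial

variable {R : Type*} [CommRing R]

theorem coeff_comp_neg_X (p : R[X]) (n : ℕ) :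
    (p.comp (-X)).coeff n = (-1) ^ n * p.coeff n := by
  induction p using Polynomial.induction_on' with
  | add p q hp hq => rw [add_comp, coeff_add, coeff_add, hp, hq, mul_add]
  | monomial m a =>
    rw [← C_mul_X_pow_eq_monomial, mul_comp, C_comp, X_pow_comp, neg_pow, ← map_one C,
      ← map_neg C, ← map_pow, mul_left_comm, coeff_C_mul, coeff_C_mul_X_pow]
    split_ifs with h <;> simp [h]

theorem coeff_eq_zero_of_comp_neg_X_eq_self [NoZeroDivisors R] (h2 : (2 : R) ≠ 0) {p : R[X]}
    (hp : p.comp (-X) = p) {n : ℕ} (hn : Odd n) : p.coeff n = 0 := by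
  have h := coeff_comp_neg_X p n
  rw [hp, hn.neg_one_pow, neg_one_mul, eq_neg_iff_add_eq_zero, ← two_mul] at h
  exact (mul_eq_zero.1 h).resolve_left h2

noncomputable def evenPoly {n : ℕ} (v : Fin n → R) : R[X] :=
  ∑ j : Fin n, monomial (2 * (j : ℕ)) (v j)

variable {n : ℕ}

theorem coeff_evenPoly_two_mul (v : Fin n → R) (j : Fin n) :
    (evenPoly v).coeff (2 * j) = v j := by
  rw [evenPoly, finsetSum_coeff, Finset.sum_eq_single j] <;>
    simp +contextual [coeff_monomial, Fin.val_inj]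

theorem natDegree_evenPoly_le (v : Fin (n + 1) → R) : (evenPoly v).natDegree ≤ 2 * n :=
  natDegree_sum_le_of_forall_le _ _ fun j _ =>
    (natDegree_monomial_le _).trans (by have := j.is_lt; omega)

theorem evenPoly_comp_neg_X (v : Fin n → R) : (evenPoly v).comp (-X) = evenPoly v := by
  simp only [evenPoly, ← C_mul_X_pow_eq_monomial, sum_comp, mul_comp, C_comp, pow_mul,
    pow_comp, X_comp, neg_sq]

theorem eq_evenPoly_of_comp_neg_X_eq_self [NoZeroDivisors R] (h2 : (2 : R) ≠ 0) {p : R[X]}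
    (hp : p.comp (-X) = p) (hdeg : p.natDegree ≤ 2 * n + 1) :
    p = evenPoly fun j : Fin (n + 1) ↦ p.coeff (2 * j) := by
  ext i
  obtain ⟨j, rfl | rfl⟩ := Nat.even_or_odd' i
  · by_cases hj : j ≤ n
    · exact (coeff_evenPoly_two_mul (fun j : Fin (n + 1) ↦ p.coeff (2 * j))
        ⟨j, Nat.lt_succ_of_le hj⟩).symm
    · rw [coeff_eq_zero_of_natDegree_lt (by omega),
        coeff_eq_zero_of_natDegree_lt ((natDegree_evenPoly_le _).trans_lt (by omega))]
  · rw [coeff_eq_zero_of_comp_neg_X_eq_self h2 hp (odd_two_mul_add_one j),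
      coeff_eq_zero_of_comp_neg_X_eq_self h2 (evenPoly_comp_neg_X _) (odd_two_mul_add_one j)]

end Polynomial

theorem Fintype.card_fin_succ_apply_zero_ne {α : Type*} [Fintype α] [DecidableEq α] (n : ℕ)
    (a : α) :
    Fintype.card {v : Fin (n + 1) → α // v 0 ≠ a} =
      (Fintype.card α - 1) * Fintype.card α ^ n := by
  let e : {v : Fin (n + 1) → α // v 0 ≠ a} ≃ {x : α // x ≠ a} × (Fin n → α) :=
    ((Fin.consEquiv fun _ ↦ α).symm.subtypeEquiv (q := fun x ↦ x.1 ≠ a) fun _ ↦ Iff.rfl).trans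
      (Equiv.prodSubtypeFstEquivSubtypeProd (α := α) (β := Fin n → α) (p := (· ≠ a)))
  simp [Fintype.card_congr e]

namespace AdjoinRoot

variable {R : Type*} [CommRing R] {k : ℕ}

theorem root_X_pow_pow_self : root (X ^ k : R[X]) ^ k = 0 := by
  rw [← mk_X, ← map_pow, mk_self]

theorem mk_X_pow_injOn (R : Type*) [CommRing R] (k : ℕ) :
    Set.InjOn (mk (X ^ k : R[X])) {p | p.natDegree < k} := by
  intro p hp q hq h
  rw [mk_eq_mk, X_pow_dvd_iff] at h
  ext i
  rcases lt_or_ge i k with hi | hi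
  · exact sub_eq_zero.1 (by simpa using h i hi)
  · rw [coeff_eq_zero_of_natDegree_lt (lt_of_lt_of_le hp hi),
      coeff_eq_zero_of_natDegree_lt (lt_of_lt_of_le hq hi)]

theorem exists_natDegree_lt_mk_X_pow_eq [Nontrivial R] (hk : k ≠ 0)
    (x : AdjoinRoot (X ^ k : R[X])) :
    ∃ p : R[X], p.natDegree < k ∧ mk _ p = x := by
  obtain ⟨q, rfl⟩ := mk_surjective x
  have hX : (X ^ k : R[X]) ≠ 1 := fun h ↦ hk (by simpa using congrArg natDegree h)
  exact ⟨q %ₘ X ^ k, by simpa using natDegree_modByMonic_lt q (monic_X_pow k) hX,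
    mk_leftInverse (monic_X_pow k) (mk _ q)⟩

end AdjoinRoot

section SigmaMap

open AdjoinRoot

variable {F : Type} [Field F] {k : ℕ}

theorem sigmaMap_mk (p : F[X]) : sigmaMap F k (mk _ p) = mk _ (p.comp (-X)) := by
  rw [sigmaMap, lift_mk, ← aeval_eq, aeval_comp]
  simp [aeval_def, AdjoinRoot.algebraMap_eq]

theorem sigmaMap_mk_eq_self_iff {p : F[X]} (hp : p.natDegree < k) :
    sigmaMap F k (mk _ p) = mk _ p ↔ p.comp (-X) = p := by
  rw [sigmaMap_mk]
  exact (mk_X_pow_injOn F k).eq_iff (by simpa [natDegree_comp] using hp) hp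

theorem isUnit_mk_X_pow_iff (hk : k ≠ 0) (p : F[X]) :
    IsUnit (mk (X ^ k) p) ↔ p.coeff 0 ≠ 0 := by
  refine ⟨fun h h0 ↦ ?_, fun h ↦ ?_⟩
  · have := h.map (ev0 F k hk)
    rw [ev0, lift_mk, eval₂_at_zero, h0] at this
    exact not_isUnit_zero this
  · obtain ⟨g, hg⟩ := X_dvd_sub_C (p := p)
    have hnil : IsNilpotent (mk (X ^ k) (p - C (p.coeff 0))) := by
      rw [hg, map_mul, mk_X]
      exact (Commute.all _ _).isNilpotent_mul_right ⟨k, root_X_pow_pow_self⟩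
    rw [← add_sub_cancel (C (p.coeff 0)) p, map_add, mk_C]
    exact hnil.isUnit_add_left_of_commute ((isUnit_iff_ne_zero.2 h).map _) (Commute.all _ _)

theorem isUnit_mk_evenPoly_iff (hk : k ≠ 0) {n : ℕ} (v : Fin (n + 1) → F) :
    IsUnit (mk (X ^ k) (evenPoly v)) ↔ v 0 ≠ 0 := by
  rw [isUnit_mk_X_pow_iff hk, ← coeff_evenPoly_two_mul v 0, Fin.val_zero, mul_zero]

theorem mk_evenPoly_injective {n : ℕ} (hn : 2 * n < k) :
    Function.Injective fun v : Fin (n + 1) → F ↦ mk (X ^ k) (evenPoly v) := by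
  intro v w h
  have hvw := mk_X_pow_injOn F k ((natDegree_evenPoly_le v).trans_lt hn)
    ((natDegree_evenPoly_le w).trans_lt hn) h
  funext j
  rw [← coeff_evenPoly_two_mul v j, ← coeff_evenPoly_two_mul w j, hvw]

theorem sigmaMap_eq_self_iff (h2 : (2 : F) ≠ 0) {n : ℕ} (hn : 2 * n < k) (hk : k ≤ 2 * n + 2)
    (x : AdjoinRoot (X ^ k : F[X])) :
    sigmaMap F k x = x ↔ ∃ v : Fin (n + 1) → F, mk (X ^ k) (evenPoly v) = x := by
  refine ⟨fun hx ↦ ?_, ?_⟩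
  · obtain ⟨p, hp, rfl⟩ := exists_natDegree_lt_mk_X_pow_eq (by omega) x
    exact ⟨_, congrArg (mk _) (eq_evenPoly_of_comp_neg_X_eq_self h2
      ((sigmaMap_mk_eq_self_iff hp).1 hx) (by omega)).symm⟩
  · rintro ⟨v, rfl⟩
    rw [sigmaMap_mk, evenPoly_comp_neg_X]

noncomputable def fixedUnits (F : Type) [Field F] (k : ℕ) :
    Subgroup (AdjoinRoot (X ^ k : F[X]))ˣ :=
  (Units.map (sigmaMap F k : AdjoinRoot (X ^ k : F[X]) →* _)).eqLocus (MonoidHom.id _)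

theorem mem_fixedUnits {u : (AdjoinRoot (X ^ k : F[X]))ˣ} :
    u ∈ fixedUnits F k ↔ sigmaMap F k u = u :=
  Units.ext_iff

theorem card_fixedUnits [Fintype F] (h2 : (2 : F) ≠ 0) {n : ℕ} (hn : 2 * n < k)
    (hk : k ≤ 2 * n + 2) :
    Nat.card (fixedUnits F k) = (Fintype.card F - 1) * Fintype.card F ^ n := by
  classical
  have hk0 : k ≠ 0 := by omega
  let f (v : {v : Fin (n + 1) → F // v 0 ≠ 0}) : fixedUnits F k :=
    ⟨((isUnit_mk_evenPoly_iff hk0 v.1).2 v.2).unit, by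
      rw [mem_fixedUnits, IsUnit.unit_spec, sigmaMap_mk, evenPoly_comp_neg_X]⟩
  have hf : Function.Bijective f := by
    refine ⟨fun v w h ↦ Subtype.ext (mk_evenPoly_injective hn ?_), fun ⟨u, hu⟩ ↦ ?_⟩
    · simpa [f] using congrArg (fun u ↦ (u.1 : AdjoinRoot (X ^ k : F[X]))) h
    · obtain ⟨v, hv⟩ := (sigmaMap_eq_self_iff h2 hn hk u).1 (mem_fixedUnits.1 hu)
      have hv0 : v 0 ≠ 0 := (isUnit_mk_evenPoly_iff hk0 v).1 (hv ▸ u.isUnit)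
      exact ⟨⟨v, hv0⟩, Subtype.ext (Units.ext hv)⟩
  rw [← Nat.card_eq_of_bijective f hf, Nat.card_eq_fintype_card,
    Fintype.card_fin_succ_apply_zero_ne]

end SigmaMap

/-- For `q` odd and `k ≥ 1`, the subgroup `H_k = {f ∈ (F_q[S]/(S^k))^× : f(−S) = f(S)}`
of invertible even polynomials has order `(q−1)·q^⌊(k−1)/2⌋`. -/
theorem stmt_7 (Fq : Type) [Field Fq] [Fintype Fq] (hq : Odd (Fintype.card Fq))
    (k : ℕ) (hk : 1 ≤ k) :
    ∃ H : Subgroup (AdjoinRoot (X ^ k : Polynomial Fq))ˣ,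
      (∀ f : (AdjoinRoot (X ^ k : Polynomial Fq))ˣ,
        f ∈ H ↔ sigmaMap Fq k (f : AdjoinRoot (X ^ k : Polynomial Fq)) =
          (f : AdjoinRoot (X ^ k : Polynomial Fq))) ∧
      Nat.card H = (Fintype.card Fq - 1) * Fintype.card Fq ^ ((k - 1) / 2) := by
  have h2 : (2 : Fq) ≠ 0 := Ring.two_ne_zero fun h ↦ by
    have := FiniteField.even_card_of_char_two h
    rw [Nat.odd_iff] at hq
    omega
  refine ⟨fixedUnits Fq k, fun f ↦ mem_fixedUnits, card_fixedUnits h2 ?_ ?_⟩ <;> omega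
end

section
/- Let q be odd and k ≥ 1. The map U_k : (F_q[S]/(S^k))^× → S¹_k given by f ↦ √(f/σ(f)) (unique square root in S¹_k) is a surjective group homomorphism with kernel H_k, the subgroup of even polynomials. -/
open Polynomial

set_option maxRecDepth 4000

section Aux

variable (Fq : Type) [Field Fq] (k : ℕ)

lemma sigma_sigma (x : AdjoinRoot (X ^ k : Polynomial Fq)) :
    sigmaMap Fq k (sigmaMap Fq k x) = x := by
  obtain ⟨p, rfl⟩ := AdjoinRoot.mk_surjective x
  have h : ((sigmaMap Fq k).comp (sigmaMap Fq k)).comp (AdjoinRoot.mk _) = AdjoinRoot.mk _ := by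
    apply Polynomial.ringHom_ext
    · intro a
      simp [sigmaMap, AdjoinRoot.lift_of]
    · simp [sigmaMap, AdjoinRoot.lift_root]
  exact DFunLike.congr_fun h p

lemma ev0_sigma (hk : k ≠ 0) (x : AdjoinRoot (X ^ k : Polynomial Fq)) :
    ev0 Fq k hk (sigmaMap Fq k x) = ev0 Fq k hk x := by
  obtain ⟨p, rfl⟩ := AdjoinRoot.mk_surjective x
  have h : ((ev0 Fq k hk).comp (sigmaMap Fq k)).comp (AdjoinRoot.mk _) =
      (ev0 Fq k hk).comp (AdjoinRoot.mk _) := by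
    apply Polynomial.ringHom_ext
    · intro a
      simp [sigmaMap, ev0, AdjoinRoot.lift_of]
    · simp [sigmaMap, ev0, AdjoinRoot.lift_root]
  exact DFunLike.congr_fun h p

lemma ev0_zero_nilpotent (hk : k ≠ 0) (x : AdjoinRoot (X ^ k : Polynomial Fq))
    (h : ev0 Fq k hk x = 0) : x ^ k = 0 := by
  obtain ⟨p, rfl⟩ := AdjoinRoot.mk_surjective x
  have h0 : p.coeff 0 = 0 := by
    rwa [ev0, AdjoinRoot.lift_mk, Polynomial.eval₂_at_zero, RingHom.id_apply] at h
  obtain ⟨q, rfl⟩ := Polynomial.X_dvd_iff.mpr h0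
  rw [map_mul, mul_pow, AdjoinRoot.mk_X]
  have hroot : (AdjoinRoot.root (X ^ k : Polynomial Fq)) ^ k = 0 := by
    have := AdjoinRoot.eval₂_root (X ^ k : Polynomial Fq)
    simpa using this
  rw [hroot, zero_mul]

lemma finite_adjoinRoot [Fintype Fq] (hk : k ≠ 0) : Finite (AdjoinRoot (X ^ k : Polynomial Fq)) := by
  have pb := AdjoinRoot.powerBasis (f := (X ^ k : Polynomial Fq)) (pow_ne_zero k X_ne_zero)
  exact Finite.of_equiv _ (pb.basis.repr.toEquiv.trans (Finsupp.equivFunOnFinite)).symm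

end Aux

/-- For `q` odd and `k ≥ 1`, the map `U_k : (F_q[S]/(S^k))^× → S¹_k`,
`f ↦ √(f/σ(f))` (the unique square root landing in `S¹_k`), is a surjective group
homomorphism onto `S¹_k` with kernel `H_k`, the subgroup of even polynomials. -/
theorem stmt_9 (Fq : Type) [Field Fq] [Fintype Fq] (hq : Odd (Fintype.card Fq))
    (k : ℕ) (hk : 1 ≤ k)
    (Hev Sone : Subgroup (AdjoinRoot (X ^ k : Polynomial Fq))ˣ)
    (hHev : ∀ f : (AdjoinRoot (X ^ k : Polynomial Fq))ˣ,
      f ∈ Hev ↔ sigmaMap Fq k (f : AdjoinRoot (X ^ k : Polynomial Fq)) =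
        (f : AdjoinRoot (X ^ k : Polynomial Fq)))
    (hSone : ∀ f : (AdjoinRoot (X ^ k : Polynomial Fq))ˣ,
      f ∈ Sone ↔
        ev0 Fq k (Nat.one_le_iff_ne_zero.mp hk) (f : AdjoinRoot (X ^ k : Polynomial Fq)) = 1 ∧
        (f : AdjoinRoot (X ^ k : Polynomial Fq)) *
          sigmaMap Fq k (f : AdjoinRoot (X ^ k : Polynomial Fq)) = 1) :
    ∃ U : (AdjoinRoot (X ^ k : Polynomial Fq))ˣ →* (AdjoinRoot (X ^ k : Polynomial Fq))ˣ,
      (∀ f : (AdjoinRoot (X ^ k : Polynomial Fq))ˣ, U f ∈ Sone) ∧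
      (∀ f : (AdjoinRoot (X ^ k : Polynomial Fq))ˣ,
        (U f) ^ 2 * Units.map (sigmaMap Fq k).toMonoidHom f = f) ∧
      U.range = Sone ∧ U.ker = Hev := by
  classical
  have hk0 : k ≠ 0 := Nat.one_le_iff_ne_zero.mp hk
  set R := AdjoinRoot (X ^ k : Polynomial Fq) with hR
  haveI : Finite R := finite_adjoinRoot Fq k hk0
  -- 2 is a unit
  have h2 : (2 : Fq) ≠ 0 := by
    intro h
    have hchar : ringChar Fq = 2 := by
      have hdvd : ringChar Fq ∣ 2 := ringChar.dvd (by exact_mod_cast h)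
      rcases (Nat.dvd_prime Nat.prime_two).mp hdvd with h1 | h1
      · exact absurd h1 (CharP.ringChar_ne_one)
      · exact h1
    have := FiniteField.even_card_of_char_two hchar
    rw [Nat.odd_iff] at hq
    omega
  have h2R : IsUnit (2 : R) := by
    have := (AdjoinRoot.of (X ^ k : Polynomial Fq)).isUnit_map (isUnit_iff_ne_zero.mpr h2)
    rwa [map_ofNat] at this
  -- no 2-torsion among units with ev0 = 1
  have key : ∀ u : Rˣ, ev0 Fq k hk0 (u : R) = 1 → (u : R) ^ 2 = 1 → u = 1 := by
    intro u hev hsq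
    have hmul : ((u : R) - 1) * ((u : R) + 1) = 0 := by
      have : (u : R) ^ 2 - 1 = 0 := by rw [hsq]; ring
      calc ((u : R) - 1) * ((u : R) + 1) = (u : R) ^ 2 - 1 := by ring
        _ = 0 := this
    have hnil : IsNilpotent ((u : R) - 1) :=
      ⟨k, ev0_zero_nilpotent Fq k hk0 _ (by rw [map_sub, hev, map_one, sub_self])⟩
    have hup : IsUnit ((u : R) + 1) := by
      have heq : (u : R) + 1 = ((u : R) - 1) + 2 := by ring
      rw [heq]
      exact hnil.isUnit_add_right_of_commute h2R (Commute.all _ _)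
    have : (u : R) - 1 = 0 := by
      rcases hup with ⟨v, hv⟩
      have := congrArg (· * (↑v⁻¹ : R)) hmul
      simp only [zero_mul, mul_assoc, ← hv, Units.mul_inv, mul_one] at this
      exact this
    ext
    rw [Units.val_one, ← sub_eq_zero]
    exact this
  -- Sone has odd cardinality
  have hodd : Odd (Nat.card Sone) := by
    rw [Nat.odd_iff]
    by_contra h
    have hdvd : 2 ∣ Nat.card Sone := Nat.dvd_of_mod_eq_zero (by omega)
    obtain ⟨g, hg⟩ := exists_prime_orderOf_dvd_card' (G := Sone) 2 hdvd
    have hg2 : g ^ 2 = 1 := by rw [← hg]; exact pow_orderOf_eq_one g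
    have hgmem : (g : Rˣ) ∈ Sone := g.2
    have hev : ev0 Fq k hk0 ((g : Rˣ) : R) = 1 := ((hSone _).mp hgmem).1
    have hg2' : ((g : Rˣ)) ^ 2 = 1 := by
      have h' := congrArg (Subtype.val) hg2
      rwa [SubmonoidClass.coe_pow, OneMemClass.coe_one] at h'
    have hsq : (((g : Rˣ)) : R) ^ 2 = 1 := by
      have h' := congrArg Units.val hg2'
      rwa [Units.val_pow_eq_pow_val, Units.val_one] at h'
    have : (g : Rˣ) = 1 := key _ hev hsq
    have hg1 : g = 1 := Subtype.ext this
    rw [hg1, orderOf_one] at hg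
    omega
  obtain ⟨t, ht⟩ := hodd
  set N := Nat.card Sone with hN
  set m := t + 1 with hm
  -- power lemma in Sone
  have hpowN : ∀ u : Rˣ, u ∈ Sone → u ^ N = 1 := by
    intro u hu
    have h' := congrArg (Subtype.val) (pow_card_eq_one' (x := (⟨u, hu⟩ : Sone)))
    rwa [SubmonoidClass.coe_pow, OneMemClass.coe_one] at h'
  -- the sigma map on units
  set σh : Rˣ →* Rˣ := Units.map (sigmaMap Fq k).toMonoidHom with hσh
  have hσcoe : ∀ f : Rˣ, ((σh f : Rˣ) : R) = sigmaMap Fq k (f : R) := fun f => rfl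
  have hσσ : ∀ f : Rˣ, σh (σh f) = f := by
    intro f
    ext
    rw [hσcoe, hσcoe, sigma_sigma]
  -- V f := f * (σh f)⁻¹ lands in Sone
  have hVmem : ∀ f : Rˣ, f * (σh f)⁻¹ ∈ Sone := by
    intro f
    rw [hSone]
    constructor
    · set e : Rˣ →* Fqˣ := Units.map (ev0 Fq k hk0).toMonoidHom with he
      have hecoe : ∀ u : Rˣ, ((e u : Fqˣ) : Fq) = ev0 Fq k hk0 (u : R) := fun u => rfl
      have h1 : e (σh f) = e f := by
        apply Units.ext
        rw [hecoe, hσcoe, ev0_sigma, ← hecoe]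
      have h2' : e (f * (σh f)⁻¹) = 1 := by
        rw [map_mul, map_inv, h1]
        group
      have h3 := congrArg (Units.val) h2'
      rw [hecoe] at h3
      simpa using h3
    · have hs : sigmaMap Fq k ((f * (σh f)⁻¹ : Rˣ) : R) = ((σh (f * (σh f)⁻¹) : Rˣ) : R) := rfl
      rw [hs, ← Units.val_mul]
      have : (f * (σh f)⁻¹) * σh (f * (σh f)⁻¹) = 1 := by
        rw [map_mul, map_inv, hσσ]
        group
      rw [this, Units.val_one]
  -- define U
  refine ⟨{ toFun := fun f => (f * (σh f)⁻¹) ^ m,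
            map_one' := by simp,
            map_mul' := by
              intro a b
              rw [map_mul, mul_inv, ← mul_pow, mul_mul_mul_comm] }, ?_, ?_, ?_, ?_⟩
  · intro f
    exact Subgroup.pow_mem _ (hVmem f) m
  · intro f
    show ((f * (σh f)⁻¹) ^ m) ^ 2 * σh f = f
    rw [← pow_mul]
    have hm2 : m * 2 = N + 1 := by omega
    rw [hm2, pow_succ, hpowN _ (hVmem f), one_mul]
    group
  · apply le_antisymm
    · rintro x ⟨f, rfl⟩
      exact Subgroup.pow_mem _ (hVmem f) m
    · intro s hs
      refine ⟨s, ?_⟩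
      show (s * (σh s)⁻¹) ^ m = s
      have hσs : σh s = s⁻¹ := by
        have h2' : (s : R) * sigmaMap Fq k (s : R) = 1 := ((hSone s).mp hs).2
        have hmul : s * σh s = 1 := Units.ext (by rw [Units.val_mul, hσcoe, h2', Units.val_one])
        exact eq_inv_of_mul_eq_one_right hmul
      rw [hσs, inv_inv, ← pow_two, ← pow_mul]
      have hm2 : 2 * m = N + 1 := by omega
      rw [hm2, pow_succ, hpowN _ hs, one_mul]
  · ext f
    rw [MonoidHom.mem_ker, hHev]
    show (f * (σh f)⁻¹) ^ m = 1 ↔ sigmaMap Fq k (f : R) = (f : R)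
    constructor
    · intro h
      have hV1 : f * (σh f)⁻¹ = 1 := by
        have : (f * (σh f)⁻¹) ^ (N + 1) = 1 := by
          have hm2 : m * 2 = N + 1 := by omega
          rw [← hm2, pow_mul, h, one_pow]
        rw [pow_succ, hpowN _ (hVmem f), one_mul] at this
        exact this
      have hf : σh f = f := (mul_inv_eq_one.mp hV1).symm
      rw [← hσcoe, hf]
    · intro h
      have : σh f = f := by ext; rw [hσcoe, h]
      rw [this]
      simp
end
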